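/- arXiv:2002.11440 — 2 statements merged into one kernel-verified Lean document; each statement's English description precedes it below -/
import Mathlib

section
/- Let f : ℝ^d → ℝ be convex with ‖∇f(x)‖₁ ≤ B for all x. Run the SGD-BGO recursion x_{k+1} = x_k − γ_k g_k with an oracle of type (O1), step sizes γ_k > 0, perturbation constants η_k > 0 and batch sizes m_k > 0, and suppose ‖x_k − x_{k₀}‖ ≤ D for all k (D bounds the iterate distances). Then for any indices 1 < k₀ < k₁ ≤ N, Σ_{k=k₀}^{k₁} 2 γ_k E[f(x_k) − f(x_{k₀})] ≤ Σ_{k=k₀}^{k₁} ( 2√d γ_k D E_k + γ_k² B_k² ), where E_k = c₁ η_k² + c₃/(η_k √m_k) and B_k² = B² + 2√d B E_k + d E_k² + c₂/η_k². -/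
/-!
Convexity gives `f (x k) - f (x k₀) ≤ ⟪∇f (x k), x k - x k₀⟫`. Replacing `∇f (x k)` by the
conditional mean of the oracle costs at most the bias `√d E k` times `D`, and since `x k - x k₀`
is `ℱ k`-measurable, the conditional mean may in turn be replaced by `g k` in expectation.
Expanding `‖x (k+1) - x k₀‖² = ‖x k - x k₀‖² - 2 γ k ⟪g k, x k - x k₀⟫ + γ k² ‖g k‖²` and
bounding `E ‖g k‖²` by the conditional variance plus `(B + √d E k)²` gives a one-step inequality;
summed over the window, the squared distances telescope and vanish at `k₀`.
-/

open MeasureTheory Real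
open scoped RealInnerProductSpace

section Euclidean

variable {ι : Type*} [Fintype ι]

theorem EuclideanSpace.norm_le_sum_abs (v : EuclideanSpace ℝ ι) : ‖v‖ ≤ ∑ i, |v i| := by
  rw [EuclideanSpace.norm_eq, ← Real.sqrt_sq (Finset.sum_nonneg fun i _ => abs_nonneg (v i))]
  gcongr
  simpa only [Real.norm_eq_abs] using
    Finset.sum_sq_le_sq_sum_of_nonneg (s := Finset.univ) fun i _ => abs_nonneg (v i)

theorem EuclideanSpace.norm_le_sqrt_card_mul {C : ℝ} (v : EuclideanSpace ℝ ι)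
    (hv : ∀ i, |v i| ≤ C) : ‖v‖ ≤ √(Fintype.card ι) * C := by
  rcases isEmpty_or_nonempty ι with hι | ⟨⟨i₀⟩⟩
  · simp [Subsingleton.elim v 0]
  have hC : 0 ≤ C := (abs_nonneg _).trans (hv i₀)
  rw [EuclideanSpace.norm_eq, ← Real.sqrt_sq hC, ← Real.sqrt_mul (Nat.cast_nonneg _)]
  gcongr
  calc ∑ i, ‖v i‖ ^ 2 ≤ ∑ _i : ι, C ^ 2 := by
        gcongr with i
        rw [Real.norm_eq_abs]
        exact hv i
    _ = Fintype.card ι * C ^ 2 := by simp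

end Euclidean

section

variable {E : Type*} [NormedAddCommGroup E] [InnerProductSpace ℝ E] [CompleteSpace E]

theorem ConvexOn.sub_le_inner_gradient {f : E → ℝ} {s : Set E} (hconv : ConvexOn ℝ s f)
    {x y : E} (hx : x ∈ s) (hy : y ∈ s) (hf : DifferentiableAt ℝ f x) :
    f x - f y ≤ ⟪gradient f x, x - y⟫ := by
  let ℓ : ℝ →ᵃ[ℝ] E := AffineMap.lineMap x y
  have hderiv : HasDerivAt (f ∘ ℓ) ⟪gradient f x, y - x⟫ 0 := by
    have := hf.hasGradientAt.hasFDerivAt.comp_hasDerivAt_of_eq (0 : ℝ)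
      AffineMap.hasDerivAt_lineMap (AffineMap.lineMap_apply_zero x y).symm
    simpa [ℓ] using this
  have hslope := (hconv.comp_affineMap ℓ).le_slope_of_hasDerivAt
    (by simpa [ℓ] using hx) (by simpa [ℓ] using hy) zero_lt_one hderiv
  rw [slope_def_field] at hslope
  simp only [ℓ, Function.comp_apply, AffineMap.lineMap_apply_one, AffineMap.lineMap_apply_zero,
    sub_zero, div_one] at hslope
  rw [← neg_sub y x, inner_neg_right]
  linarith

variable {Ω : Type*} {m mΩ : MeasurableSpace Ω} {μ : Measure Ω}

theorem integral_inner_condExp_left (hm : m ≤ mΩ) [SigmaFinite (μ.trim hm)] {g h : Ω → E}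
    (hg : Integrable g μ) (hh : StronglyMeasurable[m] h)
    (hgh : Integrable (fun ω => ⟪g ω, h ω⟫) μ) :
    ∫ ω, ⟪(μ[g|m]) ω, h ω⟫ ∂μ = ∫ ω, ⟪g ω, h ω⟫ ∂μ := by
  calc ∫ ω, ⟪(μ[g|m]) ω, h ω⟫ ∂μ = ∫ ω, (μ[fun ω => ⟪g ω, h ω⟫|m]) ω ∂μ :=
        integral_congr_ae (condExp_bilin_of_stronglyMeasurable_right (innerSL ℝ) hh hgh hg).symm
    _ = ∫ ω, ⟪g ω, h ω⟫ ∂μ := integral_condExp hm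

theorem integral_norm_sq_le_of_condExp_le [IsProbabilityMeasure μ] (hm : m ≤ mΩ) {g : Ω → E}
    (hg : Integrable g μ) (hg2 : Integrable (fun ω => ‖g ω‖ ^ 2) μ) {R V : ℝ}
    (hR : ∀ᵐ ω ∂μ, ‖(μ[g|m]) ω‖ ≤ R)
    (hV : ∀ᵐ ω ∂μ, (μ[fun ω => ‖g ω - (μ[g|m]) ω‖ ^ 2|m]) ω ≤ V) :
    ∫ ω, ‖g ω‖ ^ 2 ∂μ ≤ R ^ 2 + V := by
  have := isFiniteMeasure_trim (μ := μ) hm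
  set G := μ[g|m]
  have hGm : StronglyMeasurable[m] G := stronglyMeasurable_condExp
  have hG : AEStronglyMeasurable G μ := (hGm.mono hm).aestronglyMeasurable
  have hG2 : Integrable (fun ω => ‖G ω‖ ^ 2) μ :=
    .of_bound (hG.norm.pow 2) (R ^ 2) <| by
      filter_upwards [hR] with ω hω
      rw [norm_pow, norm_norm]
      exact pow_le_pow_left₀ (norm_nonneg _) hω 2
  have hgG : Integrable (fun ω => ⟪g ω, G ω⟫) μ :=
    (innerSL ℝ).integrable_of_bilin_of_bdd_right R hg hG hR
  have hcross : ∫ ω, ⟪g ω, G ω⟫ ∂μ = ∫ ω, ‖G ω‖ ^ 2 ∂μ := by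
    rw [← integral_inner_condExp_left hm hg hGm hgG]
    simp only [real_inner_self_eq_norm_sq, G]
  -- Pythagoras: `g - G` is orthogonal in `L²` to the `m`-measurable `G`
  have hpyth : ∫ ω, ‖g ω - G ω‖ ^ 2 ∂μ = ∫ ω, ‖g ω‖ ^ 2 ∂μ - ∫ ω, ‖G ω‖ ^ 2 ∂μ := by
    simp_rw [norm_sub_sq_real]
    rw [integral_add (by exact hg2.sub (hgG.const_mul 2)) hG2, integral_sub hg2 (hgG.const_mul 2),
      integral_const_mul, hcross]
    ring
  have hvar : ∫ ω, ‖g ω - G ω‖ ^ 2 ∂μ ≤ V := by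
    rw [← integral_condExp hm]
    simpa using integral_mono_ae integrable_condExp (integrable_const V) hV
  have hmean : ∫ ω, ‖G ω‖ ^ 2 ∂μ ≤ R ^ 2 := by
    simpa using integral_mono_ae hG2 (integrable_const (R ^ 2)) <| by
      filter_upwards [hR] with ω hω using pow_le_pow_left₀ (norm_nonneg _) hω 2
  linarith

theorem integral_sub_le_integral_inner_add [IsProbabilityMeasure μ] (hm : m ≤ mΩ)
    {f : E → ℝ} (hf : Differentiable ℝ f) (hconv : ConvexOn ℝ Set.univ f)
    {B : ℝ} (hgrad : ∀ y, ‖gradient f y‖ ≤ B) {x z g : Ω → E}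
    (hx : StronglyMeasurable[m] x) (hz : StronglyMeasurable[m] z) (hg : Integrable g μ)
    {D : ℝ} (hxz : ∀ ω, ‖x ω - z ω‖ ≤ D) {ε : ℝ}
    (hbias : ∀ᵐ ω ∂μ, ‖(μ[g|m]) ω - gradient f (x ω)‖ ≤ ε) :
    ∫ ω, (f (x ω) - f (z ω)) ∂μ ≤ ∫ ω, ⟪g ω, x ω - z ω⟫ ∂μ + ε * D := by
  have := isFiniteMeasure_trim (μ := μ) hm
  have hB : 0 ≤ B := (norm_nonneg _).trans (hgrad 0)
  have hh : StronglyMeasurable[m] fun ω => x ω - z ω := hx.sub hz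
  have hlip : ∀ a b, ‖f a - f b‖ ≤ B * ‖a - b‖ := fun a b =>
    convex_univ.norm_image_sub_le_of_norm_fderiv_le (fun y _ => hf y)
      (fun y _ => (InnerProductSpace.toDual ℝ E).symm.norm_map (fderiv ℝ f y) ▸ hgrad y)
      (Set.mem_univ b) (Set.mem_univ a)
  have hgap_int : Integrable (fun ω => f (x ω) - f (z ω)) μ :=
    .of_bound ((hf.continuous.comp_stronglyMeasurable (hx.mono hm)).sub
      (hf.continuous.comp_stronglyMeasurable (hz.mono hm))).aestronglyMeasurable (B * D)
      (ae_of_all _ fun ω => (hlip _ _).trans (mul_le_mul_of_nonneg_left (hxz ω) hB))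
  have hinner_int : ∀ {u : Ω → E}, Integrable u μ → Integrable (fun ω => ⟪u ω, x ω - z ω⟫) μ :=
    fun hu => (innerSL ℝ).integrable_of_bilin_of_bdd_right D hu
      (hh.mono hm).aestronglyMeasurable (ae_of_all _ hxz)
  have hgap : ∀ᵐ ω ∂μ, f (x ω) - f (z ω) ≤ ⟪(μ[g|m]) ω, x ω - z ω⟫ + ε * D := by
    filter_upwards [hbias] with ω hω
    calc f (x ω) - f (z ω) ≤ ⟪gradient f (x ω), x ω - z ω⟫ :=
          hconv.sub_le_inner_gradient (Set.mem_univ _) (Set.mem_univ _) (hf _)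
      _ = ⟪(μ[g|m]) ω, x ω - z ω⟫ + ⟪gradient f (x ω) - (μ[g|m]) ω, x ω - z ω⟫ := by
          rw [inner_sub_left]; ring
      _ ≤ ⟪(μ[g|m]) ω, x ω - z ω⟫ + ‖gradient f (x ω) - (μ[g|m]) ω‖ * ‖x ω - z ω‖ := by
          gcongr; exact real_inner_le_norm _ _
      _ ≤ ⟪(μ[g|m]) ω, x ω - z ω⟫ + ε * D := by
          rw [norm_sub_rev]
          grw [hω, hxz ω]
          exact (norm_nonneg _).trans hω
  calc ∫ ω, (f (x ω) - f (z ω)) ∂μ ≤ ∫ ω, (⟪(μ[g|m]) ω, x ω - z ω⟫ + ε * D) ∂μ :=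
        integral_mono_ae hgap_int ((hinner_int integrable_condExp).add (integrable_const _)) hgap
    _ = ∫ ω, ⟪g ω, x ω - z ω⟫ ∂μ + ε * D := by
        rw [integral_add (hinner_int integrable_condExp) (integrable_const _),
          integral_inner_condExp_left hm hg hh (hinner_int hg)]
        simp

theorem integral_sub_le_of_sgd_step [IsProbabilityMeasure μ] (hm : m ≤ mΩ)
    {f : E → ℝ} (hf : Differentiable ℝ f) (hconv : ConvexOn ℝ Set.univ f)
    {B : ℝ} (hgrad : ∀ y, ‖gradient f y‖ ≤ B) {x x' z g : Ω → E}
    (hx : StronglyMeasurable[m] x) (hz : StronglyMeasurable[m] z) (hg : Integrable g μ)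
    {γ : ℝ} (hγ : 0 < γ) (hstep : ∀ ω, x' ω = x ω - γ • g ω)
    {D : ℝ} (hxz : ∀ ω, ‖x ω - z ω‖ ≤ D) (hx'z : ∀ ω, ‖x' ω - z ω‖ ≤ D) {ε V : ℝ}
    (hbias : ∀ᵐ ω ∂μ, ‖(μ[g|m]) ω - gradient f (x ω)‖ ≤ ε)
    (hvar : ∀ᵐ ω ∂μ, (μ[fun ω => ‖g ω - (μ[g|m]) ω‖ ^ 2|m]) ω ≤ V) :
    2 * γ * ∫ ω, (f (x ω) - f (z ω)) ∂μ + ∫ ω, ‖x' ω - z ω‖ ^ 2 ∂μ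
      ≤ ∫ ω, ‖x ω - z ω‖ ^ 2 ∂μ + 2 * γ * (ε * D) + γ ^ 2 * ((B + ε) ^ 2 + V) := by
  have hdiff : ∀ ω, x' ω - z ω = (x ω - z ω) - γ • g ω := fun ω => by
    rw [hstep]; abel
  -- bounded iterates force a bounded step; this is what makes `‖g‖²` integrable
  have hg_bdd : ∀ ω, ‖g ω‖ ≤ 2 * D / γ := fun ω => by
    rw [le_div_iff₀ hγ]
    calc ‖g ω‖ * γ = ‖γ • g ω‖ := by rw [norm_smul, Real.norm_of_nonneg hγ.le, mul_comm]
      _ = ‖(x ω - z ω) - (x' ω - z ω)‖ := by rw [hdiff, sub_sub_cancel]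
      _ ≤ 2 * D := (norm_sub_le _ _).trans (by linarith [hxz ω, hx'z ω])
  have hexpand : ∀ ω, ‖x' ω - z ω‖ ^ 2
      = ‖x ω - z ω‖ ^ 2 - 2 * γ * ⟪g ω, x ω - z ω⟫ + γ ^ 2 * ‖g ω‖ ^ 2 := fun ω => by
    rw [hdiff, norm_sub_sq_real, real_inner_smul_right, norm_smul, real_inner_comm,
      Real.norm_of_nonneg hγ.le]
    ring
  have hh2 : Integrable (fun ω => ‖x ω - z ω‖ ^ 2) μ :=
    .of_bound (((hx.sub hz).mono hm).aestronglyMeasurable.norm.pow 2) (D ^ 2)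
      (ae_of_all _ fun ω => by
        rw [norm_pow, norm_norm]; exact pow_le_pow_left₀ (norm_nonneg _) (hxz ω) 2)
  have hgh : Integrable (fun ω => ⟪g ω, x ω - z ω⟫) μ :=
    (innerSL ℝ).integrable_of_bilin_of_bdd_right D hg
      ((hx.sub hz).mono hm).aestronglyMeasurable (ae_of_all _ hxz)
  have hg2 : Integrable (fun ω => ‖g ω‖ ^ 2) μ :=
    .of_bound (hg.aestronglyMeasurable.norm.pow 2) ((2 * D / γ) ^ 2)
      (ae_of_all _ fun ω => by
        rw [norm_pow, norm_norm]; exact pow_le_pow_left₀ (norm_nonneg _) (hg_bdd ω) 2)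
  have henergy : ∫ ω, ‖x' ω - z ω‖ ^ 2 ∂μ = ∫ ω, ‖x ω - z ω‖ ^ 2 ∂μ
      - 2 * γ * ∫ ω, ⟪g ω, x ω - z ω⟫ ∂μ + γ ^ 2 * ∫ ω, ‖g ω‖ ^ 2 ∂μ := by
    simp_rw [hexpand]
    rw [integral_add (by exact hh2.sub (hgh.const_mul _)) (hg2.const_mul _),
      integral_sub hh2 (hgh.const_mul _), integral_const_mul, integral_const_mul]
  have hgap := integral_sub_le_integral_inner_add hm hf hconv hgrad hx hz hg hxz hbias
  have hmean : ∀ᵐ ω ∂μ, ‖(μ[g|m]) ω‖ ≤ B + ε := by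
    filter_upwards [hbias] with ω hω
    linarith [norm_le_norm_add_norm_sub' ((μ[g|m]) ω) (gradient f (x ω)), hgrad (x ω)]
  have hmoment := integral_norm_sq_le_of_condExp_le hm hg hg2 hmean hvar
  have := mul_le_mul_of_nonneg_left hgap (by positivity : (0 : ℝ) ≤ 2 * γ)
  have := mul_le_mul_of_nonneg_left hmoment (sq_nonneg γ)
  linarith

end

theorem Finset.sum_Icc_add_le_of_le_add_sub {u v a : ℕ → ℝ} {k₀ k₁ : ℕ} (hk : k₀ ≤ k₁)
    (h : ∀ k ∈ Finset.Icc k₀ k₁, u k + a (k + 1) ≤ a k + v k) :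
    ∑ k ∈ Finset.Icc k₀ k₁, u k + a (k₁ + 1) ≤ a k₀ + ∑ k ∈ Finset.Icc k₀ k₁, v k := by
  have hsum := Finset.sum_le_sum h
  rw [Finset.sum_add_distrib, Finset.sum_add_distrib] at hsum
  linarith [Finset.sum_Icc_sub hk a, Finset.sum_sub_distrib (s := Finset.Icc k₀ k₁)
    (f := fun k => a (k + 1)) (g := a)]

theorem sgd_bgo_O1_window_lemma_general
    {d : ℕ} {Ω : Type*} {mΩ : MeasurableSpace Ω}
    (μ : Measure Ω) [IsProbabilityMeasure μ]
    (ℱ : Filtration ℕ mΩ)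
    (f : EuclideanSpace ℝ (Fin d) → ℝ)
    (hf : Differentiable ℝ f)
    (hconv : ConvexOn ℝ Set.univ f)
    (B c₁ c₂ c₃ : ℝ)
    -- (A2): `‖∇f(x)‖₁ ≤ B`
    (hgradB : ∀ x, ∑ i, |gradient f x i| ≤ B)
    (N : ℕ)
    -- algorithm parameters: positive step sizes, perturbation constants and
    -- batch sizes
    (γ η m : ℕ → ℝ)
    (hγpos : ∀ k, 1 ≤ k → 0 < γ k)
    -- iterates and oracle outputs
    (x g : ℕ → Ω → EuclideanSpace ℝ (Fin d))
    (hx_adapted : ∀ k, StronglyMeasurable[ℱ k] (x k))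
    (hg_int : ∀ k, Integrable (g k) μ)
    (hrec : ∀ k, 1 ≤ k → k ≤ N → ∀ ω, x (k + 1) ω = x k ω - γ k • g k ω)
    -- oracle (O1), condition (a): bias bound in the sup-norm
    (hbias : ∀ k, 1 ≤ k → k ≤ N →
      ∀ᵐ ω ∂μ, ∀ i, |(μ[g k|ℱ k]) ω i - gradient f (x k ω) i|
        ≤ c₁ * η k ^ 2 + c₃ / (η k * Real.sqrt (m k)))
    -- oracle (O1), condition (b): conditional variance bound
    (hvar : ∀ k, 1 ≤ k → k ≤ N →
      ∀ᵐ ω ∂μ,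
        (μ[fun ω' => ‖g k ω' - (μ[g k|ℱ k]) ω'‖ ^ 2|ℱ k]) ω ≤ c₂ / η k ^ 2)
    -- indices of the window
    (k₀ k₁ : ℕ) (hk₀ : 1 < k₀) (hk₀k₁ : k₀ < k₁) (hk₁ : k₁ ≤ N)
    -- `D` bounds the distances of the iterates to `x_{k₀}`
    (D : ℝ)
    (hD : ∀ k, ∀ ω, ‖x k ω - x k₀ ω‖ ≤ D)
    (E B2 : ℕ → ℝ)
    (hE : ∀ k, E k = c₁ * η k ^ 2 + c₃ / (η k * Real.sqrt (m k)))
    (hB2 : ∀ k, B2 k = B ^ 2 + 2 * Real.sqrt d * B * E k + d * E k ^ 2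
        + c₂ / η k ^ 2) :
    ∑ k ∈ Finset.Icc k₀ k₁,
        2 * γ k * ∫ ω, (f (x k ω) - f (x k₀ ω)) ∂μ
      ≤ ∑ k ∈ Finset.Icc k₀ k₁,
          (2 * Real.sqrt d * γ k * D * E k + γ k ^ 2 * B2 k) := by
  set a : ℕ → ℝ := fun k => ∫ ω, ‖x k ω - x k₀ ω‖ ^ 2 ∂μ
  have hstep : ∀ k ∈ Finset.Icc k₀ k₁, 2 * γ k * ∫ ω, (f (x k ω) - f (x k₀ ω)) ∂μ + a (k + 1)
      ≤ a k + (2 * Real.sqrt d * γ k * D * E k + γ k ^ 2 * B2 k) := by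
    intro k hk
    obtain ⟨hk₀k, hkk₁⟩ := Finset.mem_Icc.mp hk
    have hbias_norm : ∀ᵐ ω ∂μ, ‖(μ[g k|ℱ k]) ω - gradient f (x k ω)‖ ≤ Real.sqrt d * E k := by
      filter_upwards [hbias k (by omega) (by omega)] with ω hω
      have := EuclideanSpace.norm_le_sqrt_card_mul (C := E k) _
        fun i => by rw [hE, PiLp.sub_apply]; exact hω i
      rwa [Fintype.card_fin] at this
    have := integral_sub_le_of_sgd_step (ℱ.le k) hf hconv
      (fun y => (EuclideanSpace.norm_le_sum_abs _).trans (hgradB y))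
      (hx_adapted k) ((hx_adapted k₀).mono (ℱ.mono hk₀k)) (hg_int k) (hγpos k (by omega))
      (hrec k (by omega) (by omega)) (hD k) (hD (k + 1)) hbias_norm (hvar k (by omega) (by omega))
    rw [hB2 k]
    linear_combination this + γ k ^ 2 * E k ^ 2 * Real.sq_sqrt (Nat.cast_nonneg d)
  have ha₀ : a k₀ = 0 := by simp [a]
  have ha₁ : 0 ≤ a (k₁ + 1) := integral_nonneg fun ω => sq_nonneg _
  linarith [Finset.sum_Icc_add_le_of_le_add_sub hk₀k₁.le hstep]

/-- **SGD-BGO under oracle (O1): key inequality over a window of iterations**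
(Lemma 1 in the paper). For indices `1 < k₀ < k₁ ≤ N`, assuming the distances
`‖x_k - x_{k₀}‖` are bounded by `D`, the weighted sum of expected suboptimality
gaps relative to `x_{k₀}` is bounded. -/
theorem sgd_bgo_O1_window_lemma
    {d : ℕ} {Ω : Type*} {mΩ : MeasurableSpace Ω}
    (μ : Measure Ω) [IsProbabilityMeasure μ]
    (ℱ : Filtration ℕ mΩ)
    (f : EuclideanSpace ℝ (Fin d) → ℝ)
    (hf : Differentiable ℝ f)
    (hconv : ConvexOn ℝ Set.univ f)
    (B c₁ c₂ c₃ : ℝ)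
    (hB : 0 < B)
    (hc₁ : 0 < c₁) (hc₂ : 0 < c₂) (hc₃ : 0 < c₃)
    -- (A2): `‖∇f(x)‖₁ ≤ B`
    (hgradB : ∀ x, ∑ i, |gradient f x i| ≤ B)
    (N : ℕ)
    -- algorithm parameters: positive step sizes, perturbation constants and
    -- batch sizes
    (γ η m : ℕ → ℝ)
    (hγpos : ∀ k, 1 ≤ k → 0 < γ k)
    (hηpos : ∀ k, 1 ≤ k → 0 < η k)
    (hmpos : ∀ k, 1 ≤ k → 0 < m k)
    -- iterates and oracle outputs
    (x g : ℕ → Ω → EuclideanSpace ℝ (Fin d))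
    (hx_adapted : ∀ k, StronglyMeasurable[ℱ k] (x k))
    (hg_int : ∀ k, Integrable (g k) μ)
    (hrec : ∀ k, 1 ≤ k → k ≤ N → ∀ ω, x (k + 1) ω = x k ω - γ k • g k ω)
    -- oracle (O1), condition (a): bias bound in the sup-norm
    (hbias : ∀ k, 1 ≤ k → k ≤ N →
      ∀ᵐ ω ∂μ, ∀ i, |(μ[g k|ℱ k]) ω i - gradient f (x k ω) i|
        ≤ c₁ * η k ^ 2 + c₃ / (η k * Real.sqrt (m k)))
    -- oracle (O1), condition (b): conditional variance bound
    (hvar : ∀ k, 1 ≤ k → k ≤ N →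
      ∀ᵐ ω ∂μ,
        (μ[fun ω' => ‖g k ω' - (μ[g k|ℱ k]) ω'‖ ^ 2|ℱ k]) ω ≤ c₂ / η k ^ 2)
    -- indices of the window
    (k₀ k₁ : ℕ) (hk₀ : 1 < k₀) (hk₀k₁ : k₀ < k₁) (hk₁ : k₁ ≤ N)
    -- `D` bounds the distances of the iterates to `x_{k₀}`
    (D : ℝ)
    (hD : ∀ k, ∀ ω, ‖x k ω - x k₀ ω‖ ≤ D)
    (E B2 : ℕ → ℝ)
    (hE : ∀ k, E k = c₁ * η k ^ 2 + c₃ / (η k * Real.sqrt (m k)))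
    (hB2 : ∀ k, B2 k = B ^ 2 + 2 * Real.sqrt d * B * E k + d * E k ^ 2
        + c₂ / η k ^ 2) :
    ∑ k ∈ Finset.Icc k₀ k₁,
        2 * γ k * ∫ ω, (f (x k ω) - f (x k₀ ω)) ∂μ
      ≤ ∑ k ∈ Finset.Icc k₀ k₁,
          (2 * Real.sqrt d * γ k * D * E k + γ k ^ 2 * B2 k) :=
  sgd_bgo_O1_window_lemma_general μ ℱ f hf hconv B c₁ c₂ c₃ hgradB N γ η m hγpos x g hx_adapted
    hg_int hrec hbias hvar k₀ k₁ hk₀ hk₀k₁ hk₁ D hD E B2 hE hB2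
end

section
/- Let f : ℝ^d → ℝ be three times continuously differentiable with all third-order partial derivatives bounded in absolute value by M > 0, let Δ be a d-dimensional standard Gaussian random vector, and let η > 0. Then the Gaussian-smoothing two-point gradient estimate satisfies ‖E[ Δ · (f(x + ηΔ) − f(x − ηΔ)) / (2η) ] − ∇f(x)‖_∞ ≤ C η² for every x ∈ ℝ^d, where C is a constant depending only on M and d (one may take C = (M/6)·E[‖Δ‖₁³ ‖Δ‖_∞]). -/
/-! Along the line `t ↦ f (x + t • Δ)`, the Taylor expansions at `±η` with Lagrange remainder
cancel the even terms, so `f (x + ηΔ) - f (x - ηΔ) = 2η ⟪∇f x, Δ⟫ + O(η³)`; expanding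
`D³f (Δ, Δ, Δ)` in coordinates bounds the third derivative along the line by `M ‖Δ‖₁³`. After
multiplying by `Δ i / (2η)` and integrating, the main term is `∑ j, ∂ⱼf x * E[Δ i * Δ j] = ∂ᵢf x`
because the coordinates are independent, centred and of unit variance, while the remainder is at
most `(M/6) η² ‖Δ‖₁³ ‖Δ‖_∞`, which is integrable since Gaussians have moments of all orders. -/

open MeasureTheory ProbabilityTheory
open scoped NNReal ENNReal InnerProductSpace

lemma exists_taylor_two_lagrange {φ : ℝ → ℝ} (hφ : ContDiff ℝ 3 φ) (h : ℝ) :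
    ∃ ξ, φ h = φ 0 + deriv φ 0 * h + iteratedDeriv 2 φ 0 * h ^ 2 / 2
      + iteratedDeriv 3 φ ξ * h ^ 3 / 6 := by
  rcases eq_or_ne h 0 with rfl | hh
  · exact ⟨0, by simp⟩
  obtain ⟨ξ, -, hξ⟩ :=
    taylor_mean_remainder_lagrange_iteratedDeriv (n := 2) hh.symm hφ.contDiffOn
  have hwithin (k : ℕ) (hk : k ≤ 3) :
      iteratedDerivWithin k φ (Set.uIcc 0 h) 0 = iteratedDeriv k φ 0 :=
    iteratedDerivWithin_eq_iteratedDeriv (uniqueDiffOn_uIcc hh.symm)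
      (hφ.contDiffAt.of_le (by exact_mod_cast hk)) Set.left_mem_uIcc
  simp only [taylor_within_apply, Finset.sum_range_succ, Finset.sum_range_zero,
    hwithin 0 (by norm_num), hwithin 1 (by norm_num), hwithin 2 (by norm_num)] at hξ
  norm_num [Nat.factorial] at hξ
  exact ⟨ξ, by linarith⟩

lemma abs_sub_sub_two_mul_deriv_le {φ : ℝ → ℝ} (hφ : ContDiff ℝ 3 φ) {K : ℝ}
    (hK : ∀ t, |iteratedDeriv 3 φ t| ≤ K) (h : ℝ) :
    |φ h - φ (-h) - 2 * h * deriv φ 0| ≤ K * |h| ^ 3 / 3 := by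
  obtain ⟨ξ₁, hξ₁⟩ := exists_taylor_two_lagrange hφ h
  obtain ⟨ξ₂, hξ₂⟩ := exists_taylor_two_lagrange hφ (-h)
  have hodd : φ h - φ (-h) - 2 * h * deriv φ 0
      = (iteratedDeriv 3 φ ξ₁ + iteratedDeriv 3 φ ξ₂) * h ^ 3 / 6 := by
    rw [hξ₁, hξ₂]; ring
  have hsum : |iteratedDeriv 3 φ ξ₁ + iteratedDeriv 3 φ ξ₂| ≤ 2 * K :=
    (abs_add_le _ _).trans (by linarith [hK ξ₁, hK ξ₂])
  rw [hodd, abs_div, abs_mul, abs_pow, abs_of_pos (by norm_num : (0 : ℝ) < 6)]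
  calc _ ≤ 2 * K * |h| ^ 3 / 6 := by gcongr
    _ = K * |h| ^ 3 / 3 := by ring

lemma iteratedDeriv_comp_add_smul {E F : Type*} [NormedAddCommGroup E] [NormedSpace ℝ E]
    [NormedAddCommGroup F] [NormedSpace ℝ F] {f : E → F} {n : ℕ} (hf : ContDiff ℝ n f)
    (x v : E) (t : ℝ) :
    iteratedDeriv n (fun s : ℝ => f (x + s • v)) t
      = iteratedFDeriv ℝ n f (x + t • v) (fun _ => v) := by
  have hline : (fun s : ℝ => f (x + s • v))
      = (fun y => f (x + y)) ∘ (ContinuousLinearMap.id ℝ ℝ).smulRight v := by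
    funext s; simp
  have hshift : ContDiff ℝ n (fun y => f (x + y)) := hf.comp (contDiff_const.add contDiff_id)
  rw [hline, iteratedDeriv_eq_iteratedFDeriv,
    ContinuousLinearMap.iteratedFDeriv_comp_right _ hshift t le_rfl,
    iteratedFDeriv_comp_add_left]
  simp

lemma MultilinearMap.norm_apply_const_le_of_basis {ι E F : Type*} [Fintype ι] [AddCommGroup E]
    [Module ℝ E] [NormedAddCommGroup F] [NormedSpace ℝ F] {n : ℕ}
    (B : MultilinearMap ℝ (fun _ : Fin n => E) F) (b : Module.Basis ι ℝ E) {M : ℝ}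
    (hB : ∀ r : Fin n → ι, ‖B (fun k => b (r k))‖ ≤ M) (v : E) :
    ‖B (fun _ => v)‖ ≤ M * (∑ i, |b.repr v i|) ^ n := by
  classical
  have hexpand : B (fun _ => v)
      = ∑ r : Fin n → ι, (∏ k, b.repr v (r k)) • B (fun k => b (r k)) := by
    conv_lhs => rw [← b.sum_repr v]
    rw [B.map_sum]
    exact Finset.sum_congr rfl fun r _ => B.map_smul_univ _ _
  have hpow : (∑ i, |b.repr v i|) ^ n = ∑ r : Fin n → ι, ∏ k, |b.repr v (r k)| := by
    rw [← Fin.prod_const, Finset.prod_univ_sum, Fintype.piFinset_univ]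
  rw [hexpand, hpow, Finset.mul_sum]
  refine (norm_sum_le _ _).trans (Finset.sum_le_sum fun r _ => ?_)
  rw [norm_smul, Real.norm_eq_abs, Finset.abs_prod, mul_comm]
  exact mul_le_mul_of_nonneg_right (hB r) (by positivity)

lemma abs_sub_sub_two_mul_fderiv_le {ι E : Type*} [Fintype ι] [NormedAddCommGroup E]
    [NormedSpace ℝ E] {f : E → ℝ} (hf : ContDiff ℝ 3 f) (b : Module.Basis ι ℝ E) {M : ℝ}
    (hM : ∀ y (r : Fin 3 → ι), |iteratedFDeriv ℝ 3 f y (fun k => b (r k))| ≤ M)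
    (x v : E) (η : ℝ) :
    |f (x + η • v) - f (x - η • v) - 2 * η * fderiv ℝ f x v|
      ≤ M * (∑ i, |b.repr v i|) ^ 3 * |η| ^ 3 / 3 := by
  set φ : ℝ → ℝ := fun t => f (x + t • v)
  have hφ : ContDiff ℝ 3 φ := hf.comp (contDiff_const.add (contDiff_id.smul contDiff_const))
  have hderiv : deriv φ 0 = fderiv ℝ f x v := by
    rw [← iteratedDeriv_one, iteratedDeriv_comp_add_smul (hf.of_le (by norm_num))]
    simp
  have hthird (t : ℝ) : |iteratedDeriv 3 φ t| ≤ M * (∑ i, |b.repr v i|) ^ 3 := by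
    rw [iteratedDeriv_comp_add_smul hf]
    exact (iteratedFDeriv ℝ 3 f (x + t • v)).toMultilinearMap.norm_apply_const_le_of_basis b
      (hM _) v
  have h := abs_sub_sub_two_mul_deriv_le hφ hthird η
  simpa only [φ, hderiv, neg_smul, ← sub_eq_add_neg] using h

lemma mul_inner_eq_sum {ι : Type*} [Fintype ι] (a : ℝ) (g v : EuclideanSpace ℝ ι) :
    a * ⟪g, v⟫_ℝ = ∑ j, g j * (a * v j) := by
  rw [PiLp.inner_apply, Finset.mul_sum]
  exact Finset.sum_congr rfl fun j _ => by simp only [RCLike.inner_apply, conj_trivial]; ring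

lemma abs_two_point_estimate_sub_le {ι : Type*} [Fintype ι] [DecidableEq ι]
    {f : EuclideanSpace ℝ ι → ℝ} (hf : ContDiff ℝ 3 f) {M : ℝ}
    (hM : ∀ y (r : Fin 3 → ι),
      |iteratedFDeriv ℝ 3 f y (fun k => EuclideanSpace.single (r k) 1)| ≤ M)
    (x v : EuclideanSpace ℝ ι) (i : ι) {η : ℝ} (hη : η ≠ 0) :
    |v i * ((f (x + η • v) - f (x - η • v)) / (2 * η)) - v i * ⟪gradient f x, v⟫_ℝ|
      ≤ M / 6 * η ^ 2 * ((∑ j, |v j|) ^ 3 * ‖(fun j => v j : ι → ℝ)‖) := by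
  have htaylor := abs_sub_sub_two_mul_fderiv_le hf (EuclideanSpace.basisFun ι ℝ).toBasis
    (by simpa using hM) x v η
  simp only [OrthonormalBasis.coe_toBasis_repr_apply, EuclideanSpace.basisFun_repr] at htaylor
  have hgrad : fderiv ℝ f x v = ⟪gradient f x, v⟫_ℝ := by
    rw [← toDual_gradient, InnerProductSpace.toDual_apply_apply]
  have hcoord : |v i| ≤ ‖(fun j => v j : ι → ℝ)‖ := by
    simpa using norm_le_pi_norm (fun j => v j : ι → ℝ) i
  have hsplit : v i * ((f (x + η • v) - f (x - η • v)) / (2 * η)) - v i * ⟪gradient f x, v⟫_ℝ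
      = v i * (f (x + η • v) - f (x - η • v) - 2 * η * fderiv ℝ f x v) / (2 * η) := by
    rw [hgrad]; field_simp
  have hη' : 0 < |η| := abs_pos.2 hη
  rw [hsplit, abs_div, abs_mul, abs_mul, abs_two]
  calc |v i| * |f (x + η • v) - f (x - η • v) - 2 * η * fderiv ℝ f x v| / (2 * |η|)
      ≤ ‖(fun j => v j : ι → ℝ)‖ * (M * (∑ j, |v j|) ^ 3 * |η| ^ 3 / 3) / (2 * |η|) := by
        gcongr
    _ = M / 6 * η ^ 2 * ((∑ j, |v j|) ^ 3 * ‖(fun j => v j : ι → ℝ)‖) := by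
        field_simp; rw [← sq_abs η]; ring

namespace ProbabilityTheory

variable {Ω : Type*} {mΩ : MeasurableSpace Ω} {μ : Measure Ω}

section Gaussian

variable {X : Ω → ℝ} {m : ℝ} {v : ℝ≥0}

lemma HasLaw.memLp_of_gaussianReal (hX : HasLaw X (gaussianReal m v) μ) {p : ℝ≥0∞}
    (hp : p ≠ ∞) : MemLp X p μ :=
  (memLp_map_measure_iff aestronglyMeasurable_id hX.aemeasurable).1
    (hX.map_eq ▸ memLp_id_gaussianReal' p hp)

lemma HasLaw.integral_eq_of_gaussianReal (hX : HasLaw X (gaussianReal m v) μ) : μ[X] = m :=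
  hX.integral_eq.trans integral_id_gaussianReal

lemma HasLaw.variance_eq_of_gaussianReal (hX : HasLaw X (gaussianReal m v) μ) :
    Var[X; μ] = v :=
  hX.variance_eq.trans variance_id_gaussianReal

end Gaussian

lemma integral_mul_eq_ite_of_pairwise_indepFun [IsProbabilityMeasure μ] {ι : Type*}
    [DecidableEq ι] {X : ι → Ω → ℝ}
    (hindep : Pairwise fun i j => X i ⟂ᵢ[μ] X j) (hL2 : ∀ i, MemLp (X i) 2 μ)
    (hmean : ∀ i, μ[X i] = 0) (hvar : ∀ i, Var[X i; μ] = 1) (i j : ι) :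
    ∫ ω, X i ω * X j ω ∂μ = if i = j then 1 else 0 := by
  have hcov : cov[X i, X j; μ] = ∫ ω, X i ω * X j ω ∂μ := by
    rw [covariance_eq_sub (hL2 i) (hL2 j), hmean, hmean, mul_zero, sub_zero]; rfl
  rw [← hcov]
  split_ifs with hij
  · rw [hij, covariance_self (hL2 j).aemeasurable, hvar]
  · exact (hindep hij).covariance_eq_zero (hL2 i) (hL2 j)

variable {ι : Type*} [Fintype ι] {X : Ω → EuclideanSpace ℝ ι}

lemma integrable_coord_mul_inner (hint : ∀ i j, Integrable (fun ω => X ω i * X ω j) μ)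
    (g : EuclideanSpace ℝ ι) (i : ι) :
    Integrable (fun ω => X ω i * ⟪g, X ω⟫_ℝ) μ := by
  simp_rw [mul_inner_eq_sum]
  exact integrable_finsetSum _ fun j _ => (hint i j).const_mul _

lemma integral_coord_mul_inner_eq [DecidableEq ι]
    (hint : ∀ i j, Integrable (fun ω => X ω i * X ω j) μ)
    (hmoment : ∀ i j, ∫ ω, X ω i * X ω j ∂μ = if i = j then 1 else 0)
    (g : EuclideanSpace ℝ ι) (i : ι) :
    ∫ ω, X ω i * ⟪g, X ω⟫_ℝ ∂μ = g i := by
  simp_rw [mul_inner_eq_sum]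
  rw [integral_finsetSum _ fun j _ => (hint i j).const_mul _]
  simp only [integral_const_mul, hmoment, mul_ite, mul_one, mul_zero, Finset.sum_ite_eq,
    Finset.mem_univ, if_true]

lemma integrable_sum_abs_pow_three_mul_norm (hX : ∀ j, MemLp (fun ω => X ω j) 4 μ) :
    Integrable (fun ω => (∑ j, |X ω j|) ^ 3 * ‖(fun j => X ω j : ι → ℝ)‖) μ := by
  set S : Ω → ℝ := fun ω => ∑ j, |X ω j|
  have hS : MemLp S (4 : ℕ) μ := memLp_finsetSum _ fun j _ => (hX j).abs
  have hN : AEStronglyMeasurable (fun ω => ‖(fun j => X ω j : ι → ℝ)‖) μ :=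
    (aemeasurable_pi_lambda _ fun j => (hX j).aemeasurable).norm.aestronglyMeasurable
  refine (hS.integrable_norm_pow (by norm_num)).mono'
    ((hS.aestronglyMeasurable.pow 3).mul hN) (ae_of_all _ fun ω => ?_)
  have hS0 : 0 ≤ S ω := Finset.sum_nonneg fun j _ => abs_nonneg _
  have hNS : ‖(fun j => X ω j : ι → ℝ)‖ ≤ S ω :=
    (pi_norm_le_iff_of_nonneg hS0).2 fun j =>
      Finset.single_le_sum (f := fun k => |X ω k|) (fun k _ => abs_nonneg _) (Finset.mem_univ j)
  rw [Real.norm_eq_abs, Real.norm_eq_abs, abs_of_nonneg hS0, abs_of_nonneg (by positivity)]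
  calc S ω ^ 3 * ‖(fun j => X ω j : ι → ℝ)‖ ≤ S ω ^ 3 * S ω := by gcongr
    _ = S ω ^ 4 := by ring

end ProbabilityTheory

lemma MeasureTheory.abs_integral_sub_integral_le {Ω : Type*} {mΩ : MeasurableSpace Ω}
    {μ : Measure Ω} {q m B : Ω → ℝ} (hq : AEStronglyMeasurable q μ) (hm : Integrable m μ)
    (hB : Integrable B μ) (hqm : ∀ ω, |q ω - m ω| ≤ B ω) :
    |∫ ω, q ω ∂μ - ∫ ω, m ω ∂μ| ≤ ∫ ω, B ω ∂μ := by
  have hdiff : Integrable (fun ω => q ω - m ω) μ :=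
    hB.mono' (hq.sub hm.aestronglyMeasurable) (ae_of_all _ hqm)
  have hqint : Integrable q μ :=
    (hdiff.add hm).congr (ae_of_all _ fun ω => sub_add_cancel (q ω) (m ω))
  rw [← integral_sub hqint hm]
  exact abs_integral_le_integral_abs.trans (integral_mono hdiff.abs hB hqm)

theorem gaussian_smoothing_bias_general
    {d : ℕ} {Ω : Type*} {mΩ : MeasurableSpace Ω}
    (μ : Measure Ω) [IsProbabilityMeasure μ]
    (f : EuclideanSpace ℝ (Fin d) → ℝ)
    (hf : ContDiff ℝ 3 f)
    (M : ℝ)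
    -- all third-order partial derivatives are bounded by `M`
    (hM3 : ∀ x : EuclideanSpace ℝ (Fin d), ∀ i j k : Fin d,
      |iteratedFDeriv ℝ 3 f x
        ![EuclideanSpace.single i 1, EuclideanSpace.single j 1,
          EuclideanSpace.single k 1]| ≤ M)
    (η : ℝ) (hη : 0 < η)
    -- `Δ` is a standard Gaussian vector: measurable, with independent
    -- standard normal coordinates
    (Δ : Ω → EuclideanSpace ℝ (Fin d))
    (hΔmeas : Measurable Δ)
    (hΔlaw : ∀ i, μ.map (fun ω => Δ ω i) = gaussianReal 0 1)
    (hΔindep : iIndepFun (fun i ω => Δ ω i) μ)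
    (C : ℝ)
    (hC : C = M / 6 *
      ∫ ω, (∑ i, |Δ ω i|) ^ 3 * ‖(fun i => Δ ω i : Fin d → ℝ)‖ ∂μ) :
    ∀ x : EuclideanSpace ℝ (Fin d), ∀ i : Fin d,
      |(∫ ω, Δ ω i * ((f (x + η • Δ ω) - f (x - η • Δ ω)) / (2 * η)) ∂μ)
          - gradient f x i|
        ≤ C * η ^ 2 := by
  intro x i
  have hM3' (y : EuclideanSpace ℝ (Fin d)) (r : Fin 3 → Fin d) :
      |iteratedFDeriv ℝ 3 f y (fun k => EuclideanSpace.single (r k) 1)| ≤ M := by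
    convert hM3 y (r 0) (r 1) (r 2) using 3
    ext k; fin_cases k <;> rfl
  have hlaw (j : Fin d) : HasLaw (fun ω => Δ ω j) (gaussianReal 0 1) μ := ⟨by fun_prop, hΔlaw j⟩
  have hL2 (j : Fin d) : MemLp (fun ω => Δ ω j) 2 μ := (hlaw j).memLp_of_gaussianReal (by simp)
  have hint (j k : Fin d) : Integrable (fun ω => Δ ω j * Δ ω k) μ :=
    (hL2 j).integrable_mul (hL2 k)
  have hmoment := integral_mul_eq_ite_of_pairwise_indepFun (fun j k hjk => hΔindep.indepFun hjk)
    hL2 (fun j => (hlaw j).integral_eq_of_gaussianReal)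
    (fun j => by simpa using (hlaw j).variance_eq_of_gaussianReal)
  have hestimate : AEStronglyMeasurable
      (fun ω => Δ ω i * ((f (x + η • Δ ω) - f (x - η • Δ ω)) / (2 * η))) μ := by
    have := hf.continuous
    fun_prop
  have hbound := integrable_sum_abs_pow_three_mul_norm fun j =>
    (hlaw j).memLp_of_gaussianReal (p := 4) (by simp)
  calc _ = |(∫ ω, Δ ω i * ((f (x + η • Δ ω) - f (x - η • Δ ω)) / (2 * η)) ∂μ)
          - ∫ ω, Δ ω i * ⟪gradient f x, Δ ω⟫_ℝ ∂μ| := by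
        rw [integral_coord_mul_inner_eq hint hmoment]
    _ ≤ ∫ ω, M / 6 * η ^ 2 * ((∑ j, |Δ ω j|) ^ 3 * ‖(fun j => Δ ω j : Fin d → ℝ)‖) ∂μ :=
        abs_integral_sub_integral_le hestimate (integrable_coord_mul_inner hint _ i)
          (hbound.const_mul _) fun ω => abs_two_point_estimate_sub_le hf hM3' x (Δ ω) i hη.ne'
    _ = C * η ^ 2 := by rw [integral_const_mul, hC]; ring

/-- **Bias of the Gaussian-smoothing two-point gradient estimate.** If `f` is
three times continuously differentiable with all third-order partial
derivatives bounded by `M`, and `Δ` is a `d`-dimensional standard Gaussian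
vector (i.i.d. standard normal coordinates), then the two-point estimate
`Δ (f(x + ηΔ) - f(x - ηΔ))/(2η)` has bias at most `C η²` in the sup-norm,
where `C = (M/6) E[‖Δ‖₁³ ‖Δ‖_∞]`. The sup-norm bound is stated
coordinatewise, and `‖Δ‖_∞` is expressed through the sup-norm on `Fin d → ℝ`. -/
theorem gaussian_smoothing_bias
    {d : ℕ} {Ω : Type*} {mΩ : MeasurableSpace Ω}
    (μ : Measure Ω) [IsProbabilityMeasure μ]
    (f : EuclideanSpace ℝ (Fin d) → ℝ)
    (hf : ContDiff ℝ 3 f)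
    (M : ℝ) (hM : 0 < M)
    -- all third-order partial derivatives are bounded by `M`
    (hM3 : ∀ x : EuclideanSpace ℝ (Fin d), ∀ i j k : Fin d,
      |iteratedFDeriv ℝ 3 f x
        ![EuclideanSpace.single i 1, EuclideanSpace.single j 1,
          EuclideanSpace.single k 1]| ≤ M)
    (η : ℝ) (hη : 0 < η)
    -- `Δ` is a standard Gaussian vector: measurable, with independent
    -- standard normal coordinates
    (Δ : Ω → EuclideanSpace ℝ (Fin d))
    (hΔmeas : Measurable Δ)
    (hΔlaw : ∀ i, μ.map (fun ω => Δ ω i) = gaussianReal 0 1)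
    (hΔindep : iIndepFun (fun i ω => Δ ω i) μ)
    (C : ℝ)
    (hC : C = M / 6 *
      ∫ ω, (∑ i, |Δ ω i|) ^ 3 * ‖(fun i => Δ ω i : Fin d → ℝ)‖ ∂μ) :
    ∀ x : EuclideanSpace ℝ (Fin d), ∀ i : Fin d,
      |(∫ ω, Δ ω i * ((f (x + η • Δ ω) - f (x - η • Δ ω)) / (2 * η)) ∂μ)
          - gradient f x i|
        ≤ C * η ^ 2 :=
  gaussian_smoothing_bias_general (mΩ := mΩ) μ f hf M hM3 η hη Δ hΔmeas hΔlaw hΔindep C hC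
end
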